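/- Let A be positive semidefinite on H, 𝔸 = diag(A,A), and X an A-bounded operator. Let 𝕊 = [[0,X],[0,0]] on H⊕H. Then dw_𝔸(𝕊) = ‖X‖_A / (2√(1 − ‖X‖_A²)) if 0 < ‖X‖_A < 1/√2, and dw_𝔸(𝕊) = ‖X‖_A² if ‖X‖_A ≥ 1/√2; also dw_𝔸(𝕊) = 0 if ‖X‖_A = 0. -/

import Mathlib

/-!
With `s = √A`, one has `⟨x, y⟩_A = ⟨s x, s y⟩`, so for `z = (x, y)` on the `𝔸`-unit sphere
Cauchy–Schwarz and `‖X y‖_A ≤ ‖X‖_A ‖y‖_A` give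
`|⟨𝕊z, z⟩_𝔸|² + ‖𝕊z‖_𝔸⁴ ≤ ‖X‖_A² u (1 - u) + ‖X‖_A⁴ u²` with `u = ‖y‖_A²`.
Choosing `x` parallel to `X y` makes Cauchy–Schwarz an equality, and letting `‖X y‖_A / ‖y‖_A`
tend to `‖X‖_A` shows the bound is sharp. Hence `dw_𝔸(𝕊)²` is the maximum of this quadratic in `u`
over `[0, 1]`, which lies inside the interval exactly when `‖X‖_A < 1/√2`.
-/

noncomputable section

namespace DW

variable {H : Type*} [NormedAddCommGroup H] [InnerProductSpace ℂ H]

/-- The semi-inner product induced by `A`: `⟨x,y⟩_A = ⟨Ax, y⟩`. -/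
def innA (A : H →L[ℂ] H) (x y : H) : ℂ := inner ℂ (A x) y

/-- The seminorm induced by `A`. -/
def normA (A : H →L[ℂ] H) (x : H) : ℝ := Real.sqrt (innA A x x).re

/-- `T` is `A`-bounded. -/
def IsABounded (A T : H →L[ℂ] H) : Prop := ∃ c > 0, ∀ x, normA A (T x) ≤ c * normA A x

/-- `S` is an `A`-adjoint of `T`. -/
def IsAAdjointPair (A T S : H →L[ℂ] H) : Prop := ∀ x y, innA A (T x) y = innA A x (S y)

/-- The `A`-operator seminorm. -/
def opNormA (A T : H →L[ℂ] H) : ℝ := sSup {r | ∃ x, normA A x = 1 ∧ r = normA A (T x)}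

/-- The `A`-minimum modulus. -/
def mA (A T : H →L[ℂ] H) : ℝ := sInf {r | ∃ x, normA A x = 1 ∧ r = normA A (T x)}

/-- The `A`-numerical radius. -/
def wA (A T : H →L[ℂ] H) : ℝ :=
  sSup {r | ∃ x, normA A x = 1 ∧ r = ‖innA A (T x) x‖}

/-- The `A`-Crawford number. -/
def cA (A T : H →L[ℂ] H) : ℝ :=
  sInf {r | ∃ x, normA A x = 1 ∧ r = ‖innA A (T x) x‖}

/-- The `A`-Davis-Wielandt radius. -/
def dwA (A T : H →L[ℂ] H) : ℝ :=
  sSup {r | ∃ x, normA A x = 1 ∧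
    r = Real.sqrt (‖innA A (T x) x‖ ^ 2 + normA A (T x) ^ 4)}

/-- The semi-inner product on `H ⊕ H` induced by `𝔸 = diag(A,A)`. -/
def innA2 (A : H →L[ℂ] H) (z w : H × H) : ℂ := innA A z.1 w.1 + innA A z.2 w.2

/-- The seminorm on `H ⊕ H` induced by `𝔸 = diag(A,A)`. -/
def normA2 (A : H →L[ℂ] H) (z : H × H) : ℝ := Real.sqrt (innA2 A z z).re

/-- The `𝔸`-numerical radius on `H ⊕ H`, `𝔸 = diag(A,A)`. -/
def wA2 (A : H →L[ℂ] H) (T : H × H →L[ℂ] H × H) : ℝ :=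
  sSup {r | ∃ z, normA2 A z = 1 ∧ r = ‖innA2 A (T z) z‖}

/-- The `𝔸`-Davis-Wielandt radius on `H ⊕ H`, `𝔸 = diag(A,A)`. -/
def dwA2 (A : H →L[ℂ] H) (T : H × H →L[ℂ] H × H) : ℝ :=
  sSup {r | ∃ z, normA2 A z = 1 ∧
    r = Real.sqrt (‖innA2 A (T z) z‖ ^ 2 + normA2 A (T z) ^ 4)}

/-- The block operator `[[0, X], [Y, 0]]` on `H ⊕ H`. -/
def offDiag (X Y : H →L[ℂ] H) : H × H →L[ℂ] H × H :=
  (X.comp (ContinuousLinearMap.snd ℂ H H)).prod (Y.comp (ContinuousLinearMap.fst ℂ H H))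

end DW

open DW

namespace DW

variable {H : Type*} [NormedAddCommGroup H] [InnerProductSpace ℂ H]

theorem normA_nonneg (A : H →L[ℂ] H) (x : H) : 0 ≤ normA A x :=
  Real.sqrt_nonneg _

section Sqrt

variable [CompleteSpace H] {A : H →L[ℂ] H}

theorem innA_eq_inner_sqrt (hA : A.IsPositive) (x y : H) :
    innA A x y = inner ℂ (CFC.sqrt A x) (CFC.sqrt A y) := by
  have hA0 : 0 ≤ A := (A.nonneg_iff_isPositive).mpr hA
  have hsa : IsSelfAdjoint (CFC.sqrt A) := IsSelfAdjoint.of_nonneg (CFC.sqrt_nonneg A)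
  have hAx : A x = CFC.sqrt A (CFC.sqrt A x) := by
    conv_lhs => rw [← CFC.sqrt_mul_sqrt_self A hA0]
    rfl
  rw [innA, hAx, ← ContinuousLinearMap.adjoint_inner_right, hsa.adjoint_eq]

theorem normA_eq_norm_sqrt (hA : A.IsPositive) (x : H) : normA A x = ‖CFC.sqrt A x‖ := by
  have h : (inner ℂ (CFC.sqrt A x) (CFC.sqrt A x)).re = ‖CFC.sqrt A x‖ ^ 2 :=
    inner_self_eq_norm_sq (𝕜 := ℂ) _
  rw [normA, innA_eq_inner_sqrt hA, h, Real.sqrt_sq (norm_nonneg _)]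

theorem norm_innA_le (hA : A.IsPositive) (x y : H) :
    ‖innA A x y‖ ≤ normA A x * normA A y := by
  rw [innA_eq_inner_sqrt hA, normA_eq_norm_sqrt hA, normA_eq_norm_sqrt hA]
  exact norm_inner_le_norm _ _

theorem normA_smul (hA : A.IsPositive) (c : ℂ) (x : H) : normA A (c • x) = ‖c‖ * normA A x := by
  rw [normA_eq_norm_sqrt hA, normA_eq_norm_sqrt hA, map_smul, norm_smul]

theorem normA_ofReal_smul (hA : A.IsPositive) {r : ℝ} (hr : 0 ≤ r) (x : H) :
    normA A ((r : ℂ) • x) = r * normA A x := by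
  rw [normA_smul hA, Complex.norm_real, Real.norm_of_nonneg hr]

theorem innA_self (hA : A.IsPositive) (x : H) : innA A x x = (normA A x : ℂ) ^ 2 := by
  rw [innA_eq_inner_sqrt hA, normA_eq_norm_sqrt hA, inner_self_eq_norm_sq_to_K]
  rfl

theorem exists_normA_eq_norm_innA_eq (hA : A.IsPositive) {x : H} (hx : normA A x = 1)
    (v : H) {r : ℝ} (hr : 0 ≤ r) : ∃ w, normA A w = r ∧ ‖innA A v w‖ = r * normA A v := by
  by_cases hv : normA A v = 0
  · refine ⟨(r : ℂ) • x, by rw [normA_ofReal_smul hA hr, hx, mul_one], ?_⟩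
    rw [hv, mul_zero]
    exact le_antisymm (by simpa [hv] using norm_innA_le hA v ((r : ℂ) • x)) (norm_nonneg _)
  · have hq : 0 ≤ r / normA A v := div_nonneg hr (normA_nonneg A v)
    refine ⟨((r / normA A v : ℝ) : ℂ) • v, ?_, ?_⟩
    · rw [normA_ofReal_smul hA hq, div_mul_cancel₀ r hv]
    · rw [innA, inner_smul_right, ← innA, innA_self hA, norm_mul, Complex.norm_real,
        Real.norm_of_nonneg hq, norm_pow, Complex.norm_real, Real.norm_of_nonneg (normA_nonneg A v)]
      field_simp

theorem normA2_eq_sqrt (hA : A.IsPositive) (z : H × H) :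
    normA2 A z = √(normA A z.1 ^ 2 + normA A z.2 ^ 2) := by
  rw [normA2, innA2, Complex.add_re, innA_self hA, innA_self hA, ← Complex.ofReal_pow,
    ← Complex.ofReal_pow, Complex.ofReal_re, Complex.ofReal_re]

theorem normA2_eq_one_iff (hA : A.IsPositive) {z : H × H} :
    normA2 A z = 1 ↔ normA A z.1 ^ 2 + normA A z.2 ^ 2 = 1 := by
  rw [normA2_eq_sqrt hA, Real.sqrt_eq_one]

end Sqrt

section OpNorm

variable {A X : H →L[ℂ] H}

theorem bddAbove_normA_apply (hX : IsABounded A X) :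
    BddAbove {r | ∃ x, normA A x = 1 ∧ r = normA A (X x)} := by
  obtain ⟨c, -, hc⟩ := hX
  refine ⟨c, ?_⟩
  rintro _ ⟨x, hx, rfl⟩
  simpa [hx] using hc x

theorem opNormA_nonneg (A X : H →L[ℂ] H) : 0 ≤ opNormA A X :=
  Real.sSup_nonneg (by rintro _ ⟨x, -, rfl⟩; exact normA_nonneg A _)

theorem opNormA_mem_closure (hX : IsABounded A X) (hunit : ∃ x : H, normA A x = 1) :
    opNormA A X ∈ closure {r | ∃ x, normA A x = 1 ∧ r = normA A (X x)} :=
  let ⟨x, hx⟩ := hunit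
  csSup_mem_closure ⟨_, x, hx, rfl⟩ (bddAbove_normA_apply hX)

theorem normA_apply_le_opNormA_mul [CompleteSpace H] (hA : A.IsPositive) (hX : IsABounded A X)
    (x : H) : normA A (X x) ≤ opNormA A X * normA A x := by
  by_cases hx : normA A x = 0
  · obtain ⟨c, -, hc⟩ := hX
    simpa [hx] using hc x
  · have hinv : 0 ≤ (normA A x)⁻¹ := inv_nonneg.2 (normA_nonneg A x)
    have hxn : normA A ((((normA A x)⁻¹ : ℝ) : ℂ) • x) = 1 := by
      rw [normA_ofReal_smul hA hinv, inv_mul_cancel₀ hx]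
    have hle : normA A (X ((((normA A x)⁻¹ : ℝ) : ℂ) • x)) ≤ opNormA A X :=
      le_csSup (bddAbove_normA_apply hX) ⟨_, hxn, rfl⟩
    rw [map_smul, normA_ofReal_smul hA hinv, inv_mul_le_iff₀ (lt_of_le_of_ne (normA_nonneg A x)
      (Ne.symm hx))] at hle
    linarith

end OpNorm

section DavisWielandt

variable {A : H →L[ℂ] H} {T : H × H →L[ℂ] H × H} {M : ℝ}

theorem dwA2_le (hne : ∃ z, normA2 A z = 1)
    (h : ∀ z, normA2 A z = 1 → √(‖innA2 A (T z) z‖ ^ 2 + normA2 A (T z) ^ 4) ≤ M) :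
    dwA2 A T ≤ M := by
  obtain ⟨z, hz⟩ := hne
  exact csSup_le ⟨_, z, hz, rfl⟩ (by rintro _ ⟨w, hw, rfl⟩; exact h w hw)

theorem le_dwA2 (h : ∀ z, normA2 A z = 1 → √(‖innA2 A (T z) z‖ ^ 2 + normA2 A (T z) ^ 4) ≤ M)
    {z : H × H} (hz : normA2 A z = 1) :
    √(‖innA2 A (T z) z‖ ^ 2 + normA2 A (T z) ^ 4) ≤ dwA2 A T :=
  le_csSup ⟨M, by rintro _ ⟨w, hw, rfl⟩; exact h w hw⟩ ⟨z, hz, rfl⟩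

end DavisWielandt

/-- On the unit sphere `‖x‖_A² + ‖y‖_A² = 1`, `dwPoly ‖X‖_A ‖y‖_A²` is the bound
`‖X‖_A² ‖x‖_A² ‖y‖_A² + ‖X‖_A⁴ ‖y‖_A⁴`. -/
def dwPoly (k u : ℝ) : ℝ := k ^ 2 * u * (1 - u) + k ^ 4 * u ^ 2

theorem continuous_dwPoly_left (u : ℝ) : Continuous fun k => dwPoly k u := by
  unfold dwPoly
  fun_prop

section UpperTriangular

variable {A X : H →L[ℂ] H}
  {S : H × H →L[ℂ] H × H}

theorem innA2_apply_of_apply_eq (hS : ∀ z, S z = (X z.2, 0)) (z : H × H) :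
    innA2 A (S z) z = innA A (X z.2) z.1 := by
  simp [hS, innA2, innA]

theorem normA2_apply_of_apply_eq (hS : ∀ z, S z = (X z.2, 0)) (z : H × H) :
    normA2 A (S z) = normA A (X z.2) := by
  simp [hS, normA2, innA2, normA, innA]

variable [CompleteSpace H]

theorem dw_sq_le_dwPoly (hA : A.IsPositive) (hX : IsABounded A X) (hS : ∀ z, S z = (X z.2, 0))
    {z : H × H} (hz : normA2 A z = 1) :
    ‖innA2 A (S z) z‖ ^ 2 + normA2 A (S z) ^ 4 ≤ dwPoly (opNormA A X) (normA A z.2 ^ 2) := by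
  rw [innA2_apply_of_apply_eq hS, normA2_apply_of_apply_eq hS]
  have hab := (normA2_eq_one_iff hA).1 hz
  have hXy := normA_apply_le_opNormA_mul hA hX z.2
  have hCS := norm_innA_le hA (X z.2) z.1
  have ht := normA_nonneg A (X z.2)
  have hx := normA_nonneg A z.1
  have hk := opNormA_nonneg A X
  calc ‖innA A (X z.2) z.1‖ ^ 2 + normA A (X z.2) ^ 4
      ≤ (normA A (X z.2) * normA A z.1) ^ 2 + normA A (X z.2) ^ 4 := by gcongr
    _ ≤ (opNormA A X * normA A z.2 * normA A z.1) ^ 2 + (opNormA A X * normA A z.2) ^ 4 := by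
        gcongr
    _ = dwPoly (opNormA A X) (normA A z.2 ^ 2) := by
        rw [dwPoly, ← hab]
        ring

theorem exists_dw_sq_eq_dwPoly (hA : A.IsPositive) (hS : ∀ z, S z = (X z.2, 0)) {x : H}
    (hx : normA A x = 1) {u : ℝ} (hu : u ∈ Set.Icc 0 1) :
    ∃ z, normA2 A z = 1 ∧
      ‖innA2 A (S z) z‖ ^ 2 + normA2 A (S z) ^ 4 = dwPoly (normA A (X x)) u := by
  obtain ⟨hu0, hu1⟩ := hu
  set y := ((√u : ℝ) : ℂ) • x
  have hy : normA A y = √u := by rw [normA_ofReal_smul hA (Real.sqrt_nonneg u), hx, mul_one]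
  have hXy : normA A (X y) = √u * normA A (X x) := by
    rw [map_smul, normA_ofReal_smul hA (Real.sqrt_nonneg u)]
  obtain ⟨w, hw, hinn⟩ := exists_normA_eq_norm_innA_eq hA hx (X y) (Real.sqrt_nonneg (1 - u))
  refine ⟨(w, y), (normA2_eq_one_iff hA).2 ?_, ?_⟩
  · simp only [hw, hy, Real.sq_sqrt hu0, Real.sq_sqrt (sub_nonneg.2 hu1)]
    ring
  · rw [innA2_apply_of_apply_eq hS, normA2_apply_of_apply_eq hS]
    simp only [hinn, hXy, dwPoly, mul_pow, Real.sq_sqrt hu0, Real.sq_sqrt (sub_nonneg.2 hu1),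
      show √u ^ 4 = u ^ 2 by rw [show 4 = 2 * 2 from rfl, pow_mul, Real.sq_sqrt hu0]]
    ring

theorem dwA2_eq_of_isGreatest (hA : A.IsPositive) (hX : IsABounded A X)
    (hunit : ∃ x : H, normA A x = 1) (hS : ∀ z, S z = (X z.2, 0)) {M : ℝ} (hM0 : 0 ≤ M)
    (hM : IsGreatest (dwPoly (opNormA A X) '' Set.Icc 0 1) (M ^ 2)) : dwA2 A S = M := by
  have hub : ∀ z, normA2 A z = 1 → √(‖innA2 A (S z) z‖ ^ 2 + normA2 A (S z) ^ 4) ≤ M := by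
    intro z hz
    have hu : normA A z.2 ^ 2 ∈ Set.Icc 0 1 := by
      have := (normA2_eq_one_iff hA).1 hz
      exact ⟨sq_nonneg _, by nlinarith [sq_nonneg (normA A z.1)]⟩
    exact (Real.sqrt_le_left hM0).2 ((dw_sq_le_dwPoly hA hX hS hz).trans (hM.2 ⟨_, hu, rfl⟩))
  obtain ⟨x₀, hx₀⟩ := hunit
  obtain ⟨z₀, hz₀, -⟩ := exists_dw_sq_eq_dwPoly hA hS hx₀ (Set.left_mem_Icc.2 zero_le_one)
  refine le_antisymm (dwA2_le ⟨z₀, hz₀⟩ hub) ?_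
  obtain ⟨u, hu, hMu⟩ := hM.1
  -- `√(dwPoly t u) ≤ dw_𝔸(S)` is a closed condition on `t`, and `‖X‖_A` is a limit of `‖Xx‖_A`.
  have hclosed : IsClosed {t | √(dwPoly t u) ≤ dwA2 A S} :=
    isClosed_le ((continuous_dwPoly_left u).sqrt) continuous_const
  have hsub : {r | ∃ x, normA A x = 1 ∧ r = normA A (X x)} ⊆ {t | √(dwPoly t u) ≤ dwA2 A S} := by
    rintro _ ⟨x, hx, rfl⟩
    obtain ⟨z, hz, hval⟩ := exists_dw_sq_eq_dwPoly hA hS hx hu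
    change √(dwPoly _ u) ≤ _
    rw [← hval]
    exact le_dwA2 hub hz
  have hk : √(dwPoly (opNormA A X) u) ≤ dwA2 A S :=
    hclosed.closure_subset_iff.2 hsub (opNormA_mem_closure hX ⟨x₀, hx₀⟩)
  rwa [hMu, Real.sqrt_sq hM0] at hk

end UpperTriangular

section Quadratic

theorem one_div_sqrt_two_sq : (1 / √2 : ℝ) ^ 2 = 1 / 2 := by
  rw [div_pow, one_pow, Real.sq_sqrt zero_le_two]

/-- Below `1/√2` the parabola `dwPoly k` peaks inside `[0, 1]`, at `u = 1 / (2 (1 - k²))`. -/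
theorem isGreatest_dwPoly_of_lt {k : ℝ} (hk0 : 0 ≤ k) (hk : k < 1 / √2) :
    IsGreatest (dwPoly k '' Set.Icc 0 1) ((k / (2 * √(1 - k ^ 2))) ^ 2) := by
  have hk2 : k ^ 2 < 1 / 2 := one_div_sqrt_two_sq ▸ pow_lt_pow_left₀ hk hk0 two_ne_zero
  have hd : 0 < 1 - k ^ 2 := by linarith
  have hM : (k / (2 * √(1 - k ^ 2))) ^ 2 = k ^ 2 / (4 * (1 - k ^ 2)) := by
    rw [div_pow, mul_pow, Real.sq_sqrt hd.le]
    norm_num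
  rw [hM]
  refine ⟨⟨1 / (2 * (1 - k ^ 2)), ⟨by positivity, ?_⟩, ?_⟩, ?_⟩
  · rw [div_le_one (by linarith)]
    linarith
  · rw [dwPoly]
    field_simp
    ring
  · rintro _ ⟨u, -, rfl⟩
    rw [dwPoly, le_div_iff₀ (by linarith)]
    nlinarith [mul_nonneg (sq_nonneg k) (sq_nonneg (2 * (1 - k ^ 2) * u - 1))]

/-- From `1/√2` on, `dwPoly k` is increasing on `[0, 1]`. -/
theorem isGreatest_dwPoly_of_le {k : ℝ} (hk : 1 / √2 ≤ k) :
    IsGreatest (dwPoly k '' Set.Icc 0 1) ((k ^ 2) ^ 2) := by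
  have hk2 : 1 / 2 ≤ k ^ 2 := one_div_sqrt_two_sq ▸ pow_le_pow_left₀ (by positivity) hk 2
  refine ⟨⟨1, Set.right_mem_Icc.2 zero_le_one, by rw [dwPoly]; ring⟩, ?_⟩
  rintro _ ⟨u, ⟨hu0, hu1⟩, rfl⟩
  have h1 : 0 ≤ k ^ 2 * (1 - u) := mul_nonneg (sq_nonneg k) (by linarith)
  have h2 : 0 ≤ k ^ 2 * (1 + u) - u := by nlinarith
  rw [dwPoly]
  nlinarith [mul_nonneg h1 h2]

end Quadratic

end DW

variable {H : Type*} [NormedAddCommGroup H] [InnerProductSpace ℂ H] [CompleteSpace H]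

theorem stmt19 (A X : H →L[ℂ] H) (hA : A.IsPositive) (hX : IsABounded A X)
    (hunit : ∃ x : H, normA A x = 1) :
    (opNormA A X = 0 →
      dwA2 A ((X.comp (ContinuousLinearMap.snd ℂ H H)).prod (0 : H × H →L[ℂ] H)) = 0) ∧
    (0 < opNormA A X → opNormA A X < 1 / Real.sqrt 2 →
      dwA2 A ((X.comp (ContinuousLinearMap.snd ℂ H H)).prod (0 : H × H →L[ℂ] H)) =
        opNormA A X / (2 * Real.sqrt (1 - opNormA A X ^ 2))) ∧
    (1 / Real.sqrt 2 ≤ opNormA A X →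
      dwA2 A ((X.comp (ContinuousLinearMap.snd ℂ H H)).prod (0 : H × H →L[ℂ] H)) =
        opNormA A X ^ 2) := by
  have hS : ∀ z, ((X.comp (ContinuousLinearMap.snd ℂ H H)).prod (0 : H × H →L[ℂ] H)) z =
      (X z.2, 0) := fun _ => rfl
  have hk0 := opNormA_nonneg A X
  have hlt : opNormA A X < 1 / √2 → dwA2 A _ = opNormA A X / (2 * √(1 - opNormA A X ^ 2)) :=
    fun hk => dwA2_eq_of_isGreatest hA hX hunit hS (by positivity)
      (isGreatest_dwPoly_of_lt hk0 hk)
  refine ⟨fun hk => ?_, fun _ => hlt, fun hk =>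
    dwA2_eq_of_isGreatest hA hX hunit hS (sq_nonneg _) (isGreatest_dwPoly_of_le hk)⟩
  rw [hlt (hk ▸ by positivity), hk, zero_div]
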